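/- Minorization condition for the Bayesian sparse group lasso Gibbs sampler. Let n ≥ 1, p ≥ 1, y ∈ ℝⁿ, X a real n×p matrix, λ₁, λ₂ > 0, α, ξ ≥ 0 and d > 0. Fix K ≥ 1 and a partition of {1,…,p} into groups G₁,…,G_K of sizes m₁,…,m_K with ∑ m_k = p. Set d₁ = 2d/λ₁, d₂ = 2d/λ₂, d₃ = 4d/(λ₁² + λ₂²), R = d + 2ξ + p²λ₂²d₂² + K²λ₁²d₁², and ε = e^{−1} · ((yᵀy − yᵀX(XᵀX + d₃⁻¹I_p)⁻¹Xᵀy + 2ξ)/R)^{(n+p)/2+α}. Then for every starting point (β₀, τ₀², γ₀², σ₀²) with V_BSGL(β₀, τ₀², γ₀², σ₀²) ≤ d, and for every (β, τ², γ², σ²) ∈ ℝᵖ × (0,∞)^K × (0,∞)ᵖ × (0,∞), the Gibbs transition density satisfies k(β, τ², γ², σ²) ≥ ε · φ_p(β; A_{τ,γ}⁻¹Xᵀy, σ²A_{τ,γ}⁻¹) · h_{(n+p)/2+α, R/2}(σ²) · ∏_{k=1}^K [ g_{λ₁, d₁, σ}(τ²_k) · ∏_{j=1}^{m_k} g_{λ₂,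 d₂, σ}(γ²_{k,j}) ], where σ = √(σ²), A_{τ,γ} = XᵀX + V_{τ,γ}⁻¹, and k(β, τ², γ², σ²) = φ_p(β; A_{τ,γ}⁻¹Xᵀy, σ²A_{τ,γ}⁻¹) · ∏_{k=1}^K g_{λ₁, ‖β₀,G_k‖, σ}(τ²_k) · ∏_{k=1}^K ∏_{j=1}^{m_k} g_{λ₂, β₀,k,j, σ}(γ²_{k,j}) · h_{(n+p)/2+α, B₀/2}(σ²) with B₀ = (y − Xβ₀)ᵀ(y − Xβ₀) + β₀ᵀV_{τ₀,γ₀}⁻¹β₀ + 2ξ. -/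
import Mathlib


open Matrix MeasureTheory Real

/-- `N_p(μ, σ²A⁻¹)` density expressed through the precision-type matrix `A`:
`φ_p(β; μ, σ²A⁻¹) = (2πσ²)^{−p/2}(det A)^{1/2} exp(−(β−μ)ᵀA(β−μ)/(2σ²))`. -/
noncomputable def gaussDens (p : ℕ) (A : Matrix (Fin p) (Fin p) ℝ) (μ : Fin p → ℝ)
    (s : ℝ) (β : Fin p → ℝ) : ℝ :=
  (2 * Real.pi * s) ^ (-(p : ℝ) / 2) * Real.sqrt A.det *
    Real.exp (-((β - μ) ⬝ᵥ (A *ᵥ (β - μ))) / (2 * s))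

/-- Density of the reciprocal of an Inverse-Gaussian(λσ/|a|, λ²) variable:
`g_{λ,a,σ}(x) = (λ/√(2π)) exp(λ|a|/σ) x^{−1/2} exp(−λ²x/2 − a²/(2σ²x))`. -/
noncomputable def gDens (lam a σ x : ℝ) : ℝ :=
  lam / Real.sqrt (2 * Real.pi) * Real.exp (lam * |a| / σ) * x ^ (-(1 : ℝ) / 2) *
    Real.exp (-(lam ^ 2 * x) / 2 - a ^ 2 / (2 * σ ^ 2 * x))

/-- Inverse-Gamma(a,b) density: `h_{a,b}(x) = (bᵃ/Γ(a)) x^{−a−1} e^{−b/x}`. -/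
noncomputable def igamDens (a b x : ℝ) : ℝ :=
  b ^ a / Real.Gamma a * x ^ (-a - 1) * Real.exp (-b / x)

/-- `‖β_{G_k}‖ = √(β_{G_k}ᵀβ_{G_k})`, where group membership is recorded by
`grp : Fin p → Fin K` (`grp i = k` iff coordinate `i` lies in group `G_k`). -/
noncomputable def groupNorm (p K : ℕ) (grp : Fin p → Fin K) (β : Fin p → ℝ)
    (k : Fin K) : ℝ :=
  Real.sqrt (∑ i ∈ Finset.univ.filter (fun i => grp i = k), β i ^ 2)

/-- `m_k`, the size of group `G_k`. -/
def groupSize (p K : ℕ) (grp : Fin p → Fin K) (k : Fin K) : ℕ :=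
  (Finset.univ.filter (fun i => grp i = k)).card

/-- `M = max_k m_k`. -/
def maxGroupSize (p K : ℕ) (grp : Fin p → Fin K) : ℕ :=
  Finset.univ.sup (groupSize p K grp)

/-- `V_{τ,γ}⁻¹`: the diagonal matrix whose entry at coordinate `i` (belonging to group
`grp i` with its own `γ²ᵢ`) is `1/τ²_{grp i} + 1/γ²ᵢ`; i.e. `V_{τ,γ}` has diagonal
entries `(1/τ²_k + 1/γ²_{k,j})⁻¹`. -/
noncomputable def VtgInv (p K : ℕ) (grp : Fin p → Fin K) (τ : Fin K → ℝ)
    (γ : Fin p → ℝ) : Matrix (Fin p) (Fin p) ℝ :=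
  Matrix.diagonal fun i => (τ (grp i))⁻¹ + (γ i)⁻¹

/-- Drift function for the Bayesian sparse group lasso:
`V_BSGL(β,τ²,γ²) = (y−Xβ)ᵀ(y−Xβ) + βᵀV_{τ,γ}⁻¹β + (λ₁²/4)∑_k τ²_k
+ (λ₂²/4)∑_k∑_j γ²_{k,j}` (it does not depend on σ²). -/
noncomputable def VBSGL (n p K : ℕ) (y : Fin n → ℝ) (X : Matrix (Fin n) (Fin p) ℝ)
    (l1 l2 : ℝ) (grp : Fin p → Fin K) (β : Fin p → ℝ) (τ : Fin K → ℝ)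
    (γ : Fin p → ℝ) : ℝ :=
  (y - X *ᵥ β) ⬝ᵥ (y - X *ᵥ β) + β ⬝ᵥ ((VtgInv p K grp τ γ) *ᵥ β)
    + l1 ^ 2 / 4 * ∑ k, τ k + l2 ^ 2 / 4 * ∑ i, γ i

/-- Gibbs transition density for the Bayesian sparse group lasso started at
`(β₀, τ₀², γ₀², σ₀²)` and evaluated at `x = (β, τ², γ², σ²)`:
`k = φ_p(β; A_{τ,γ}⁻¹Xᵀy, σ²A_{τ,γ}⁻¹) ∏_k g_{λ₁,‖β₀,G_k‖,σ}(τ²_k)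
∏_{k,j} g_{λ₂,β₀,k,j,σ}(γ²_{k,j}) h_{(n+p)/2+α, B₀/2}(σ²)` with `σ = √σ²`,
`A_{τ,γ} = XᵀX + V_{τ,γ}⁻¹` and `B₀ = (y−Xβ₀)ᵀ(y−Xβ₀) + β₀ᵀV_{τ₀,γ₀}⁻¹β₀ + 2ξ`. -/
noncomputable def kBSGL (n p K : ℕ) (y : Fin n → ℝ) (X : Matrix (Fin n) (Fin p) ℝ)
    (l1 l2 α ξ : ℝ) (grp : Fin p → Fin K) (β₀ : Fin p → ℝ) (τ₀ : Fin K → ℝ)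
    (γ₀ : Fin p → ℝ) (x : (Fin p → ℝ) × (Fin K → ℝ) × (Fin p → ℝ) × ℝ) : ℝ :=
  gaussDens p (Xᵀ * X + VtgInv p K grp x.2.1 x.2.2.1)
      ((Xᵀ * X + VtgInv p K grp x.2.1 x.2.2.1)⁻¹ *ᵥ (Xᵀ *ᵥ y)) x.2.2.2 x.1
    * (∏ k, gDens l1 (groupNorm p K grp β₀ k) (Real.sqrt x.2.2.2) (x.2.1 k))
    * (∏ i, gDens l2 (β₀ i) (Real.sqrt x.2.2.2) (x.2.2.1 i))
    * igamDens (((n : ℝ) + p) / 2 + α)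
        (((y - X *ᵥ β₀) ⬝ᵥ (y - X *ᵥ β₀)
            + β₀ ⬝ᵥ ((VtgInv p K grp τ₀ γ₀) *ᵥ β₀) + 2 * ξ) / 2)
        x.2.2.2
lemma dot_self_nonneg' {m : ℕ} (v : Fin m → ℝ) : 0 ≤ v ⬝ᵥ v :=
  Finset.sum_nonneg fun i _ => mul_self_nonneg _

lemma gDens_pos {l a σ x : ℝ} (hl : 0 < l) (hx : 0 < x) : 0 < gDens l a σ x := by
  unfold gDens
  have h1 : (0:ℝ) < x ^ (-(1:ℝ)/2) := Real.rpow_pos_of_pos hx _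
  positivity

lemma gDens_mono (l A b σ x : ℝ) (hl : 0 < l) (hσ : 0 < σ) (hx : 0 < x) (hb : |b| ≤ A) :
    gDens l A σ x * Real.exp (-(l * (A - |b|)) / σ) ≤ gDens l b σ x := by
  have hA0 : 0 ≤ A := (abs_nonneg b).trans hb
  have hb2 : b ^ 2 ≤ A ^ 2 := by
    calc b ^ 2 = |b| ^ 2 := (sq_abs b).symm
    _ ≤ A ^ 2 := pow_le_pow_left₀ (abs_nonneg b) hb 2
  have hden : (0:ℝ) < 2 * σ ^ 2 * x := by positivity
  have h1 : Real.exp (l * |A| / σ) * Real.exp (-(l ^ 2 * x) / 2 - A ^ 2 / (2 * σ ^ 2 * x))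
      * Real.exp (-(l * (A - |b|)) / σ)
      ≤ Real.exp (l * |b| / σ) * Real.exp (-(l ^ 2 * x) / 2 - b ^ 2 / (2 * σ ^ 2 * x)) := by
    rw [← Real.exp_add, ← Real.exp_add, ← Real.exp_add, Real.exp_le_exp,
      abs_of_nonneg hA0]
    have hdiv : b ^ 2 / (2 * σ ^ 2 * x) ≤ A ^ 2 / (2 * σ ^ 2 * x) := by gcongr
    have hfield : l * A / σ + (-(l * (A - |b|)) / σ) = l * |b| / σ := by
      field_simp; ring
    linarith
  have hC : (0:ℝ) ≤ l / Real.sqrt (2 * Real.pi) * x ^ (-(1:ℝ)/2) := by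
    have : (0:ℝ) < x ^ (-(1:ℝ)/2) := Real.rpow_pos_of_pos hx _
    positivity
  calc gDens l A σ x * Real.exp (-(l * (A - |b|)) / σ)
      = (l / Real.sqrt (2 * Real.pi) * x ^ (-(1:ℝ)/2)) *
        (Real.exp (l * |A| / σ) * Real.exp (-(l ^ 2 * x) / 2 - A ^ 2 / (2 * σ ^ 2 * x))
          * Real.exp (-(l * (A - |b|)) / σ)) := by unfold gDens; ring
    _ ≤ (l / Real.sqrt (2 * Real.pi) * x ^ (-(1:ℝ)/2)) *
        (Real.exp (l * |b| / σ) * Real.exp (-(l ^ 2 * x) / 2 - b ^ 2 / (2 * σ ^ 2 * x))) :=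
        mul_le_mul_of_nonneg_left h1 hC
    _ = gDens l b σ x := by unfold gDens; ring
lemma quadMin {n p : ℕ} (y : Fin n → ℝ) (X : Matrix (Fin n) (Fin p) ℝ) {c : ℝ} (hc : 0 < c)
    (f : Fin p → ℝ) (hf : ∀ i, c⁻¹ ≤ f i) (v : Fin p → ℝ) :
    0 ≤ y ⬝ᵥ y - y ⬝ᵥ (X *ᵥ ((Xᵀ * X + c⁻¹ • (1 : Matrix (Fin p) (Fin p) ℝ))⁻¹ *ᵥ (Xᵀ *ᵥ y)))
    ∧ y ⬝ᵥ y - y ⬝ᵥ (X *ᵥ ((Xᵀ * X + c⁻¹ • (1 : Matrix (Fin p) (Fin p) ℝ))⁻¹ *ᵥ (Xᵀ *ᵥ y)))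
      ≤ (y - X *ᵥ v) ⬝ᵥ (y - X *ᵥ v) + v ⬝ᵥ ((Matrix.diagonal f) *ᵥ v) := by
  set A : Matrix (Fin p) (Fin p) ℝ := Xᵀ * X + c⁻¹ • 1 with hA
  have hXX : (Xᵀ * X).PosSemidef := by
    have := Matrix.posSemidef_conjTranspose_mul_self X
    rwa [Matrix.conjTranspose_eq_transpose_of_trivial] at this
  have hI : ((c⁻¹ • 1 : Matrix (Fin p) (Fin p) ℝ)).PosDef := by
    rw [Matrix.smul_one_eq_diagonal]
    exact Matrix.PosDef.diagonal (fun i => by positivity)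
  have hA3 : A.PosDef := Matrix.PosDef.posSemidef_add hXX hI
  have hdet : IsUnit A.det := isUnit_iff_ne_zero.mpr hA3.det_pos.ne'
  set μ : Fin p → ℝ := A⁻¹ *ᵥ (Xᵀ *ᵥ y) with hμ
  have hAμ : A *ᵥ μ = Xᵀ *ᵥ y := by
    rw [hμ, Matrix.mulVec_mulVec, Matrix.mul_nonsing_inv _ hdet, Matrix.one_mulVec]
  have hsymm : Aᵀ = A := by
    have h := hA3.isHermitian
    rwa [Matrix.IsHermitian, Matrix.conjTranspose_eq_transpose_of_trivial] at h
  have hd1 : ∀ w : Fin p → ℝ, w ⬝ᵥ (A *ᵥ μ) = y ⬝ᵥ (X *ᵥ w) := by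
    intro w
    rw [hAμ, Matrix.mulVec_transpose, dotProduct_comm, ← Matrix.dotProduct_mulVec]
  have hd2 : ∀ w : Fin p → ℝ, μ ⬝ᵥ (A *ᵥ w) = y ⬝ᵥ (X *ᵥ w) := by
    intro w
    rw [Matrix.dotProduct_mulVec]
    have hv : μ ᵥ* A = A *ᵥ μ := by
      nth_rewrite 1 [← hsymm]
      rw [Matrix.vecMul_transpose]
    rw [hv, hAμ, Matrix.mulVec_transpose, ← Matrix.dotProduct_mulVec]
  have hXw : ∀ w : Fin p → ℝ, w ⬝ᵥ ((Xᵀ * X) *ᵥ w) = (X *ᵥ w) ⬝ᵥ (X *ᵥ w) := by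
    intro w
    rw [← Matrix.mulVec_mulVec, Matrix.dotProduct_mulVec, Matrix.vecMul_transpose]
  have hsw : ∀ w : Fin p → ℝ, w ⬝ᵥ ((c⁻¹ • (1 : Matrix (Fin p) (Fin p) ℝ)) *ᵥ w)
      = c⁻¹ * (w ⬝ᵥ w) := by
    intro w
    rw [Matrix.smul_mulVec, Matrix.one_mulVec, dotProduct_smul, smul_eq_mul]
  have hAq : ∀ w : Fin p → ℝ, w ⬝ᵥ (A *ᵥ w) = (X *ᵥ w) ⬝ᵥ (X *ᵥ w) + c⁻¹ * (w ⬝ᵥ w) := by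
    intro w
    rw [hA, Matrix.add_mulVec, dotProduct_add, hXw, hsw]
  have hposq : ∀ w : Fin p → ℝ, 0 ≤ w ⬝ᵥ (A *ᵥ w) := by
    intro w
    rw [hAq]
    exact add_nonneg (dot_self_nonneg' _) (mul_nonneg (inv_nonneg.2 hc.le) (dot_self_nonneg' _))
  have hkey : ∀ w : Fin p → ℝ, (y - X *ᵥ w) ⬝ᵥ (y - X *ᵥ w) + c⁻¹ * (w ⬝ᵥ w)
      - (y ⬝ᵥ y - y ⬝ᵥ (X *ᵥ μ)) = (w - μ) ⬝ᵥ (A *ᵥ (w - μ)) := by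
    intro w
    have e1 : (w - μ) ⬝ᵥ (A *ᵥ (w - μ))
        = w ⬝ᵥ (A *ᵥ w) - w ⬝ᵥ (A *ᵥ μ) - μ ⬝ᵥ (A *ᵥ w) + μ ⬝ᵥ (A *ᵥ μ) := by
      rw [Matrix.mulVec_sub, sub_dotProduct, dotProduct_sub, dotProduct_sub]
      ring
    have e2 : (y - X *ᵥ w) ⬝ᵥ (y - X *ᵥ w)
        = y ⬝ᵥ y - 2 * (y ⬝ᵥ (X *ᵥ w)) + (X *ᵥ w) ⬝ᵥ (X *ᵥ w) := by
      rw [dotProduct_sub, sub_dotProduct, sub_dotProduct, dotProduct_comm (X *ᵥ w) y]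
      ring
    rw [e1, hd1 w, hd2 w, hd1 μ, hAq w, e2]
    ring
  have hμ0 : 0 ≤ y ⬝ᵥ y - y ⬝ᵥ (X *ᵥ μ) := by
    have h0 := hkey μ
    simp only [sub_self, Matrix.mulVec_zero, dotProduct_zero] at h0
    have := dot_self_nonneg' (y - X *ᵥ μ)
    have := dot_self_nonneg' μ
    have hci : 0 ≤ c⁻¹ := inv_nonneg.2 hc.le
    nlinarith
  have hdiag : c⁻¹ * (v ⬝ᵥ v) ≤ v ⬝ᵥ (Matrix.diagonal f *ᵥ v) := by
    have e : v ⬝ᵥ (Matrix.diagonal f *ᵥ v) = ∑ i, v i * (f i * v i) := by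
      simp [dotProduct, Matrix.mulVec_diagonal]
    have e2 : c⁻¹ * (v ⬝ᵥ v) = ∑ i, c⁻¹ * (v i * v i) := by
      simp [dotProduct, Finset.mul_sum]
    rw [e, e2]
    apply Finset.sum_le_sum
    intro i _
    have := hf i
    nlinarith [mul_self_nonneg (v i)]
  refine ⟨hμ0, ?_⟩
  have h1 := hkey v
  have h2 := hposq (v - μ)
  linarith
lemma prod_gDens_le {ι : Type*} [Fintype ι] (l A σ : ℝ) (hl : 0 < l) (hσ : 0 < σ)
    (hA : 0 ≤ A) (b x : ι → ℝ) (hx : ∀ i, 0 < x i) (hb : ∀ i, |b i| ≤ A) :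
    (∏ i, gDens l A σ (x i)) * Real.exp (-((Fintype.card ι : ℝ) * (l * A)) / σ)
      ≤ ∏ i, gDens l (b i) σ (x i) := by
  have step : ∀ i, gDens l A σ (x i) * Real.exp (-(l * (A - |b i|)) / σ)
      ≤ gDens l (b i) σ (x i) :=
    fun i => gDens_mono l A (b i) σ (x i) hl hσ (hx i) (hb i)
  have hexp : Real.exp (-((Fintype.card ι : ℝ) * (l * A)) / σ)
      ≤ Real.exp (∑ i, -(l * (A - |b i|)) / σ) := by
    rw [Real.exp_le_exp]
    calc -((Fintype.card ι : ℝ) * (l * A)) / σ = ∑ _i : ι, -(l * A) / σ := by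
          rw [Finset.sum_const, Finset.card_univ, nsmul_eq_mul]
          ring
      _ ≤ ∑ i, -(l * (A - |b i|)) / σ := by
          apply Finset.sum_le_sum
          intro i _
          rw [div_le_div_iff_of_pos_right hσ]
          have := abs_nonneg (b i)
          nlinarith
  calc (∏ i, gDens l A σ (x i)) * Real.exp (-((Fintype.card ι : ℝ) * (l * A)) / σ)
      ≤ (∏ i, gDens l A σ (x i)) * Real.exp (∑ i, -(l * (A - |b i|)) / σ) := by
        apply mul_le_mul_of_nonneg_left hexp
        exact Finset.prod_nonneg fun i _ => (gDens_pos hl (hx i)).le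
    _ = ∏ i, (gDens l A σ (x i) * Real.exp (-(l * (A - |b i|)) / σ)) := by
        rw [Finset.prod_mul_distrib, ← Real.exp_sum]
    _ ≤ ∏ i, gDens l (b i) σ (x i) := by
        apply Finset.prod_le_prod
        · intro i _
          exact mul_nonneg (gDens_pos hl (hx i)).le (Real.exp_pos _).le
        · intro i _
          exact step i

set_option maxHeartbeats 1000000 in
/-- minorization condition for the Bayesian sparse group lasso Gibbs
sampler. With `d₁ = 2d/λ₁`, `d₂ = 2d/λ₂`, `d₃ = 4d/(λ₁² + λ₂²)`,
`R = d + 2ξ + p²λ₂²d₂² + K²λ₁²d₁²` and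
`ε = e^{−1}((yᵀy − yᵀX(XᵀX + d₃⁻¹I_p)⁻¹Xᵀy + 2ξ)/R)^{(n+p)/2+α}`, for every starting
point in the small set `{V_BSGL ≤ d}` and every state `(β, τ², γ², σ²)`,
`k(β,τ²,γ²,σ²) ≥ ε φ_p(β; A_{τ,γ}⁻¹Xᵀy, σ²A_{τ,γ}⁻¹) h_{(n+p)/2+α,R/2}(σ²)
∏_k [g_{λ₁,d₁,σ}(τ²_k) ∏_j g_{λ₂,d₂,σ}(γ²_{k,j})]`. -/
theorem sparseGroupLasso_minorization_condition (n p K : ℕ) (hn : 1 ≤ n) (hp : 1 ≤ p)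
    (hK : 1 ≤ K) (y : Fin n → ℝ) (X : Matrix (Fin n) (Fin p) ℝ) (l1 l2 α ξ d : ℝ)
    (h1 : 0 < l1) (h2 : 0 < l2) (hα : 0 ≤ α) (hξ : 0 ≤ ξ) (hd : 0 < d)
    (grp : Fin p → Fin K) (hmono : Monotone grp) (hsurj : Function.Surjective grp)
    (β₀ : Fin p → ℝ) (τ₀ : Fin K → ℝ) (γ₀ : Fin p → ℝ) (s₀ : ℝ)
    (hτ₀ : ∀ k, 0 < τ₀ k) (hγ₀ : ∀ i, 0 < γ₀ i) (hs₀ : 0 < s₀)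
    (hsmall : VBSGL n p K y X l1 l2 grp β₀ τ₀ γ₀ ≤ d)
    (β : Fin p → ℝ) (τ : Fin K → ℝ) (γ : Fin p → ℝ) (s : ℝ)
    (hτ : ∀ k, 0 < τ k) (hγ : ∀ i, 0 < γ i) (hs : 0 < s) :
    Real.exp (-1)
        * ((y ⬝ᵥ y
              - y ⬝ᵥ (X *ᵥ ((Xᵀ * X
                  + (4 * d / (l1 ^ 2 + l2 ^ 2))⁻¹ • (1 : Matrix (Fin p) (Fin p) ℝ))⁻¹
                  *ᵥ (Xᵀ *ᵥ y)))
              + 2 * ξ)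
            / (d + 2 * ξ + p ^ 2 * l2 ^ 2 * (2 * d / l2) ^ 2
                + K ^ 2 * l1 ^ 2 * (2 * d / l1) ^ 2)) ^ (((n : ℝ) + p) / 2 + α)
        * (gaussDens p (Xᵀ * X + VtgInv p K grp τ γ)
              ((Xᵀ * X + VtgInv p K grp τ γ)⁻¹ *ᵥ (Xᵀ *ᵥ y)) s β
            * igamDens (((n : ℝ) + p) / 2 + α)
                ((d + 2 * ξ + p ^ 2 * l2 ^ 2 * (2 * d / l2) ^ 2
                    + K ^ 2 * l1 ^ 2 * (2 * d / l1) ^ 2) / 2) s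
            * (∏ k, (gDens l1 (2 * d / l1) (Real.sqrt s) (τ k)
                * ∏ i ∈ Finset.univ.filter (fun i => grp i = k),
                    gDens l2 (2 * d / l2) (Real.sqrt s) (γ i))))
      ≤ kBSGL n p K y X l1 l2 α ξ grp β₀ τ₀ γ₀ (β, τ, γ, s) := by
  unfold kBSGL
  dsimp only
  have hσ : 0 < Real.sqrt s := Real.sqrt_pos.2 hs
  have hσ2 : Real.sqrt s ^ 2 = s := Real.sq_sqrt hs.le
  set σ := Real.sqrt s with hσdef
  set d1 := 2 * d / l1 with hd1def
  set d2 := 2 * d / l2 with hd2def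
  have hd1 : 0 < d1 := by rw [hd1def]; positivity
  have hd2 : 0 < d2 := by rw [hd2def]; positivity
  set a := ((n : ℝ) + p) / 2 + α with hadef
  have hn' : (1:ℝ) ≤ (n:ℝ) := by exact_mod_cast hn
  have hp' : (1:ℝ) ≤ (p:ℝ) := by exact_mod_cast hp
  have hK' : (1:ℝ) ≤ (K:ℝ) := by exact_mod_cast hK
  have ha : 0 < a := by rw [hadef]; linarith
  set R := d + 2 * ξ + (p:ℝ) ^ 2 * l2 ^ 2 * d2 ^ 2 + (K:ℝ) ^ 2 * l1 ^ 2 * d1 ^ 2 with hRdef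
  have hR : 0 < R := by
    rw [hRdef]; positivity
  set c := y ⬝ᵥ y - y ⬝ᵥ (X *ᵥ ((Xᵀ * X
      + (4 * d / (l1 ^ 2 + l2 ^ 2))⁻¹ • (1 : Matrix (Fin p) (Fin p) ℝ))⁻¹
      *ᵥ (Xᵀ *ᵥ y))) + 2 * ξ with hcdef
  set B := (y - X *ᵥ β₀) ⬝ᵥ (y - X *ᵥ β₀)
      + β₀ ⬝ᵥ ((VtgInv p K grp τ₀ γ₀) *ᵥ β₀) + 2 * ξ with hBdef
  set G := gaussDens p (Xᵀ * X + VtgInv p K grp τ γ)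
      ((Xᵀ * X + VtgInv p K grp τ γ)⁻¹ *ᵥ (Xᵀ *ᵥ y)) s β with hGdef
  -- facts from the drift condition
  have hVd : ∀ i, 0 ≤ (τ₀ (grp i))⁻¹ + (γ₀ i)⁻¹ := fun i =>
    add_nonneg (inv_nonneg.2 (hτ₀ _).le) (inv_nonneg.2 (hγ₀ _).le)
  have hquadsum : β₀ ⬝ᵥ (VtgInv p K grp τ₀ γ₀ *ᵥ β₀)
      = ∑ i, ((τ₀ (grp i))⁻¹ + (γ₀ i)⁻¹) * β₀ i ^ 2 := by
    simp only [VtgInv, dotProduct, Matrix.mulVec_diagonal]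
    exact Finset.sum_congr rfl fun i _ => by ring
  rw [VBSGL, hquadsum] at hsmall
  have h0res : 0 ≤ (y - X *ᵥ β₀) ⬝ᵥ (y - X *ᵥ β₀) := dot_self_nonneg' _
  have h0quad : 0 ≤ ∑ i, ((τ₀ (grp i))⁻¹ + (γ₀ i)⁻¹) * β₀ i ^ 2 :=
    Finset.sum_nonneg fun i _ => mul_nonneg (hVd i) (sq_nonneg _)
  have hτsum0 : 0 ≤ l1 ^ 2 / 4 * ∑ k, τ₀ k :=
    mul_nonneg (by positivity) (Finset.sum_nonneg fun k _ => (hτ₀ k).le)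
  have hγsum0 : 0 ≤ l2 ^ 2 / 4 * ∑ i, γ₀ i :=
    mul_nonneg (by positivity) (Finset.sum_nonneg fun i _ => (hγ₀ i).le)
  have hτk : ∀ k, τ₀ k ≤ 4 * d / l1 ^ 2 := by
    intro k
    have h2 : l1 ^ 2 / 4 * ∑ j, τ₀ j ≤ d := by linarith
    have h3 := mul_le_mul_of_nonneg_left h2
      (le_of_lt (show (0:ℝ) < 4 / l1 ^ 2 by positivity))
    have h4 : 4 / l1 ^ 2 * (l1 ^ 2 / 4 * ∑ j, τ₀ j) = ∑ j, τ₀ j := by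
      field_simp
    have h5 : 4 / l1 ^ 2 * d = 4 * d / l1 ^ 2 := by ring
    have h6 : τ₀ k ≤ ∑ j, τ₀ j :=
      Finset.single_le_sum (fun j _ => (hτ₀ j).le) (Finset.mem_univ k)
    linarith
  have hγig : ∀ i, γ₀ i ≤ 4 * d / l2 ^ 2 := by
    intro i
    have h2 : l2 ^ 2 / 4 * ∑ j, γ₀ j ≤ d := by linarith
    have h3 := mul_le_mul_of_nonneg_left h2
      (le_of_lt (show (0:ℝ) < 4 / l2 ^ 2 by positivity))
    have h4 : 4 / l2 ^ 2 * (l2 ^ 2 / 4 * ∑ j, γ₀ j) = ∑ j, γ₀ j := by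
      field_simp
    have h5 : 4 / l2 ^ 2 * d = 4 * d / l2 ^ 2 := by ring
    have h6 : γ₀ i ≤ ∑ j, γ₀ j :=
      Finset.single_le_sum (fun j _ => (hγ₀ j).le) (Finset.mem_univ i)
    linarith
  have hquadle : ∑ i, ((τ₀ (grp i))⁻¹ + (γ₀ i)⁻¹) * β₀ i ^ 2 ≤ d := by linarith
  have hgn : ∀ k, |groupNorm p K grp β₀ k| ≤ d1 := by
    intro k
    rw [groupNorm, abs_of_nonneg (Real.sqrt_nonneg _)]
    set S := ∑ i ∈ Finset.univ.filter (fun i => grp i = k), β₀ i ^ 2 with hSdef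
    have hS0 : 0 ≤ S := Finset.sum_nonneg fun i _ => sq_nonneg _
    have hS : (τ₀ k)⁻¹ * S ≤ d := by
      rw [hSdef, Finset.mul_sum]
      calc ∑ i ∈ Finset.univ.filter (fun i => grp i = k), (τ₀ k)⁻¹ * β₀ i ^ 2
          ≤ ∑ i ∈ Finset.univ.filter (fun i => grp i = k),
              ((τ₀ (grp i))⁻¹ + (γ₀ i)⁻¹) * β₀ i ^ 2 := by
            apply Finset.sum_le_sum
            intro i hi
            have hik : grp i = k := by simpa using (Finset.mem_filter.1 hi).2
            rw [hik]
            exact mul_le_mul_of_nonneg_right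
              (le_add_of_nonneg_right (inv_nonneg.2 (hγ₀ i).le)) (sq_nonneg _)
        _ ≤ ∑ i, ((τ₀ (grp i))⁻¹ + (γ₀ i)⁻¹) * β₀ i ^ 2 :=
            Finset.sum_le_sum_of_subset_of_nonneg (Finset.filter_subset _ _)
              (fun i _ _ => mul_nonneg (hVd i) (sq_nonneg _))
        _ ≤ d := hquadle
    have h3 := mul_le_mul_of_nonneg_left hS (hτ₀ k).le
    have h4 : τ₀ k * ((τ₀ k)⁻¹ * S) = S := by
      rw [← mul_assoc, mul_inv_cancel₀ (hτ₀ k).ne', one_mul]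
    have h5 : τ₀ k * d ≤ (4 * d / l1 ^ 2) * d := mul_le_mul_of_nonneg_right (hτk k) hd.le
    have h6 : (4 * d / l1 ^ 2) * d = d1 ^ 2 := by
      rw [hd1def]; field_simp; ring
    have hS2 : S ≤ d1 ^ 2 := by rw [← h4]; linarith
    calc Real.sqrt S ≤ Real.sqrt (d1 ^ 2) := Real.sqrt_le_sqrt hS2
      _ = d1 := Real.sqrt_sq hd1.le
  have hβa : ∀ i, |β₀ i| ≤ d2 := by
    intro i
    have h1' : ((τ₀ (grp i))⁻¹ + (γ₀ i)⁻¹) * β₀ i ^ 2 ≤ d :=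
      le_trans (Finset.single_le_sum
        (fun j _ => mul_nonneg (hVd j) (sq_nonneg _)) (Finset.mem_univ i)) hquadle
    have h2' : (γ₀ i)⁻¹ * β₀ i ^ 2 ≤ d :=
      le_trans (mul_le_mul_of_nonneg_right
        (le_add_of_nonneg_left (inv_nonneg.2 (hτ₀ (grp i)).le)) (sq_nonneg _)) h1'
    have h3 := mul_le_mul_of_nonneg_left h2' (hγ₀ i).le
    have h4 : γ₀ i * ((γ₀ i)⁻¹ * β₀ i ^ 2) = β₀ i ^ 2 := by
      rw [← mul_assoc, mul_inv_cancel₀ (hγ₀ i).ne', one_mul]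
    have h5 : γ₀ i * d ≤ (4 * d / l2 ^ 2) * d := mul_le_mul_of_nonneg_right (hγig i) hd.le
    have h6 : (4 * d / l2 ^ 2) * d = d2 ^ 2 := by rw [hd2def]; field_simp; ring
    have h7 : β₀ i ^ 2 ≤ d2 ^ 2 := by rw [← h4]; linarith
    calc |β₀ i| = Real.sqrt (β₀ i ^ 2) := (Real.sqrt_sq_eq_abs _).symm
      _ ≤ Real.sqrt (d2 ^ 2) := Real.sqrt_le_sqrt h7
      _ = d2 := Real.sqrt_sq hd2.le
  -- quadratic minimization facts
  have hd3 : (0:ℝ) < 4 * d / (l1 ^ 2 + l2 ^ 2) := by positivity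
  have hf : ∀ i, (4 * d / (l1 ^ 2 + l2 ^ 2))⁻¹ ≤ (τ₀ (grp i))⁻¹ + (γ₀ i)⁻¹ := by
    intro i
    have e : (4 * d / (l1 ^ 2 + l2 ^ 2))⁻¹ = l1 ^ 2 / (4 * d) + l2 ^ 2 / (4 * d) := by
      rw [inv_div]; field_simp
    have hτi : l1 ^ 2 / (4 * d) ≤ (τ₀ (grp i))⁻¹ := by
      have h := inv_anti₀ (hτ₀ (grp i)) (hτk (grp i))
      rwa [inv_div] at h
    have hγii : l2 ^ 2 / (4 * d) ≤ (γ₀ i)⁻¹ := by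
      have h := inv_anti₀ (hγ₀ i) (hγig i)
      rwa [inv_div] at h
    rw [e]; linarith
  obtain ⟨hc0', hcle'⟩ := quadMin y X hd3 (fun i => (τ₀ (grp i))⁻¹ + (γ₀ i)⁻¹) hf β₀
  have hdiagV : Matrix.diagonal (fun i => (τ₀ (grp i))⁻¹ + (γ₀ i)⁻¹)
      = VtgInv p K grp τ₀ γ₀ := rfl
  rw [hdiagV] at hcle'
  have hcge0 : 0 ≤ c := by rw [hcdef]; linarith
  have hBd' : (y - X *ᵥ β₀) ⬝ᵥ (y - X *ᵥ β₀)
      + β₀ ⬝ᵥ (VtgInv p K grp τ₀ γ₀ *ᵥ β₀) ≤ d := by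
    rw [hquadsum]; linarith
  have hcB : c ≤ B := by rw [hcdef, hBdef]; linarith
  have hB0 : 0 ≤ B := by rw [hBdef, hquadsum]; linarith
  have hBR : B ≤ d + 2 * ξ := by rw [hBdef]; linarith
  -- nonnegativity of the shared factors
  have hG : 0 ≤ G := by
    rw [hGdef, gaussDens]
    have hbase : (0:ℝ) < 2 * Real.pi * s :=
      mul_pos (mul_pos two_pos Real.pi_pos) hs
    exact mul_nonneg (mul_nonneg (Real.rpow_nonneg hbase.le _) (Real.sqrt_nonneg _))
      (Real.exp_pos _).le
  have hΓ : 0 < Real.Gamma a := Real.Gamma_pos_of_pos ha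
  set u := (K:ℝ) * (l1 * d1) with hudef
  set v := (p:ℝ) * (l2 * d2) with hvdef
  have hu : 0 ≤ u := by rw [hudef]; positivity
  have hv : 0 ≤ v := by rw [hvdef]; positivity
  have hQ1 : (∏ k, gDens l1 d1 σ (τ k)) * Real.exp (-u / σ)
      ≤ ∏ k, gDens l1 (groupNorm p K grp β₀ k) σ (τ k) := by
    have h := prod_gDens_le l1 d1 σ h1 hσ hd1.le (groupNorm p K grp β₀) τ hτ hgn
    rw [hudef]
    simpa [Fintype.card_fin] using h
  have hQ2 : (∏ i, gDens l2 d2 σ (γ i)) * Real.exp (-v / σ)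
      ≤ ∏ i, gDens l2 (β₀ i) σ (γ i) := by
    have h := prod_gDens_le l2 d2 σ h2 hσ hd2.le β₀ γ hγ hβa
    rw [hvdef]
    simpa [Fintype.card_fin] using h
  have hRB : u ^ 2 + v ^ 2 ≤ R - B := by
    have e : u ^ 2 + v ^ 2
        = (p:ℝ) ^ 2 * l2 ^ 2 * d2 ^ 2 + (K:ℝ) ^ 2 * l1 ^ 2 * d1 ^ 2 := by
      rw [hudef, hvdef]; ring
    rw [hRdef, hBdef]
    linarith
  have hstar : Real.exp (-1) * (c / R) ^ a * igamDens a (R / 2) s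
      ≤ Real.exp (-u / σ) * Real.exp (-v / σ) * igamDens a (B / 2) s := by
    simp only [igamDens]
    have hpow : (c / R) ^ a * (R / 2) ^ a = (c / 2) ^ a := by
      rw [← Real.mul_rpow (div_nonneg hcge0 hR.le) (by positivity)]
      congr 1
      field_simp
    have hpow2 : (c / 2) ^ a ≤ (B / 2) ^ a :=
      Real.rpow_le_rpow (by linarith) (by linarith) ha.le
    have hexpineq : Real.exp (-1) * Real.exp (-(R / 2) / s)
        ≤ Real.exp (-u / σ) * Real.exp (-v / σ) * Real.exp (-(B / 2) / s) := by
      have hkey : (-1 : ℝ) + -(R / 2) / s ≤ -u / σ + -v / σ + -(B / 2) / s := by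
        rw [← hσ2]
        have hmain : 2 * σ * u + 2 * σ * v ≤ 2 * σ ^ 2 + (R - B) := by
          have e1 : (0:ℝ) ≤ u ^ 2 - 2 * σ * u + σ ^ 2 := by
            calc (0:ℝ) ≤ (u - σ) ^ 2 := sq_nonneg _
              _ = u ^ 2 - 2 * σ * u + σ ^ 2 := by ring
          have e2 : (0:ℝ) ≤ v ^ 2 - 2 * σ * v + σ ^ 2 := by
            calc (0:ℝ) ≤ (v - σ) ^ 2 := sq_nonneg _
              _ = v ^ 2 - 2 * σ * v + σ ^ 2 := by ring
          linarith
        have hden : (0:ℝ) < 2 * σ ^ 2 := by positivity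
        have eL : (-1 : ℝ) + -(R / 2) / σ ^ 2 = (-(2 * σ ^ 2) - R) / (2 * σ ^ 2) := by
          field_simp; ring
        have eR : -u / σ + -v / σ + -(B / 2) / σ ^ 2
            = (-(2 * σ * u) - 2 * σ * v - B) / (2 * σ ^ 2) := by
          field_simp; ring
        rw [eL, eR, div_le_div_iff_of_pos_right hden]
        linarith
      calc Real.exp (-1) * Real.exp (-(R / 2) / s)
          = Real.exp ((-1 : ℝ) + -(R / 2) / s) := (Real.exp_add _ _).symm
        _ ≤ Real.exp (-u / σ + -v / σ + -(B / 2) / s) := Real.exp_le_exp.2 hkey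
        _ = Real.exp (-u / σ) * Real.exp (-v / σ) * Real.exp (-(B / 2) / s) := by
            rw [Real.exp_add, Real.exp_add]
    have hBnn : 0 ≤ (B / 2) ^ a := Real.rpow_nonneg (by linarith) _
    calc Real.exp (-1) * (c / R) ^ a
          * ((R / 2) ^ a / Real.Gamma a * s ^ (-a - 1) * Real.exp (-(R / 2) / s))
        = (c / R) ^ a * (R / 2) ^ a / Real.Gamma a * s ^ (-a - 1)
            * (Real.exp (-1) * Real.exp (-(R / 2) / s)) := by ring
      _ = (c / 2) ^ a / Real.Gamma a * s ^ (-a - 1)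
            * (Real.exp (-1) * Real.exp (-(R / 2) / s)) := by rw [hpow]
      _ ≤ (B / 2) ^ a / Real.Gamma a * s ^ (-a - 1)
            * (Real.exp (-u / σ) * Real.exp (-v / σ) * Real.exp (-(B / 2) / s)) := by
          apply mul_le_mul
          · exact mul_le_mul_of_nonneg_right ((div_le_div_iff_of_pos_right hΓ).2 hpow2)
              (Real.rpow_nonneg hs.le _)
          · exact hexpineq
          · positivity
          · exact mul_nonneg (div_nonneg hBnn hΓ.le) (Real.rpow_nonneg hs.le _)
      _ = Real.exp (-u / σ) * Real.exp (-v / σ)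
            * ((B / 2) ^ a / Real.Gamma a * s ^ (-a - 1) * Real.exp (-(B / 2) / s)) := by ring
  have hQ1nn : 0 ≤ ∏ k, gDens l1 d1 σ (τ k) :=
    Finset.prod_nonneg fun k _ => (gDens_pos h1 (hτ k)).le
  have hQ2nn : 0 ≤ ∏ i, gDens l2 d2 σ (γ i) :=
    Finset.prod_nonneg fun i _ => (gDens_pos h2 (hγ i)).le
  have hP1nn : 0 ≤ ∏ k, gDens l1 (groupNorm p K grp β₀ k) σ (τ k) :=
    Finset.prod_nonneg fun k _ => (gDens_pos h1 (hτ k)).le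
  have hHB : 0 ≤ igamDens a (B / 2) s := by
    rw [igamDens]
    exact mul_nonneg (mul_nonneg (div_nonneg (Real.rpow_nonneg (by linarith) _) hΓ.le)
      (Real.rpow_nonneg hs.le _)) (Real.exp_pos _).le
  have hsplit : (∏ k, (gDens l1 d1 σ (τ k)
        * ∏ i ∈ Finset.univ.filter (fun i => grp i = k), gDens l2 d2 σ (γ i)))
      = (∏ k, gDens l1 d1 σ (τ k)) * ∏ i, gDens l2 d2 σ (γ i) := by
    rw [Finset.prod_mul_distrib, Finset.prod_fiberwise]
  rw [hsplit]
  calc Real.exp (-1) * (c / R) ^ a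
        * (G * igamDens a (R / 2) s
          * ((∏ k, gDens l1 d1 σ (τ k)) * ∏ i, gDens l2 d2 σ (γ i)))
      = (G * ((∏ k, gDens l1 d1 σ (τ k)) * ∏ i, gDens l2 d2 σ (γ i)))
          * (Real.exp (-1) * (c / R) ^ a * igamDens a (R / 2) s) := by ring
    _ ≤ (G * ((∏ k, gDens l1 d1 σ (τ k)) * ∏ i, gDens l2 d2 σ (γ i)))
          * (Real.exp (-u / σ) * Real.exp (-v / σ) * igamDens a (B / 2) s) :=
        mul_le_mul_of_nonneg_left hstar
          (mul_nonneg hG (mul_nonneg hQ1nn hQ2nn))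
    _ = G * (((∏ k, gDens l1 d1 σ (τ k)) * Real.exp (-u / σ))
          * ((∏ i, gDens l2 d2 σ (γ i)) * Real.exp (-v / σ))) * igamDens a (B / 2) s := by
        ring
    _ ≤ G * ((∏ k, gDens l1 (groupNorm p K grp β₀ k) σ (τ k))
          * (∏ i, gDens l2 (β₀ i) σ (γ i))) * igamDens a (B / 2) s := by
        apply mul_le_mul_of_nonneg_right _ hHB
        apply mul_le_mul_of_nonneg_left _ hG
        exact mul_le_mul hQ1 hQ2
          (mul_nonneg hQ2nn (Real.exp_pos _).le) hP1nn
    _ = G * (∏ k, gDens l1 (groupNorm p K grp β₀ k) σ (τ k))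
          * (∏ i, gDens l2 (β₀ i) σ (γ i)) * igamDens a (B / 2) s := by ring
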